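/- arXiv:1410.7028 — 5 statements merged into one kernel-verified Lean document; each statement's English description precedes it below -/
import Mathlib

section
/- Let k be an algebraically closed field of characteristic zero, let m ≥ 1 and n ≥ 2m. Then there exists a surjective morphism of Lie algebras from the Yang–Mills algebra ym(n) onto the free Lie algebra on m generators. Equivalently, there exists a surjective Lie algebra morphism φ from the free Lie algebra over k on generators x_1, …, x_n onto the free Lie algebra over k on m generators such that φ(r_j) = 0 for all j = 1, …, n. -/
open FreeLieAlgebra

/-- The Yang–Mills relation `r j = ∑ i [xᵢ,[xᵢ,xⱼ]]` in the free Lie algebra on `n`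
generators over `k`. -/
noncomputable def ymRel (k : Type*) [Field k] (n : ℕ) (j : Fin n) :
    FreeLieAlgebra k (Fin n) :=
  ∑ i : Fin n, ⁅of k i, ⁅of k i, of k j⁆⁆

private lemma sum_range_two_mul' {A : Type*} [AddCommMonoid A] (F : ℕ → A) (M : ℕ) :
    ∑ i ∈ Finset.range (2 * M), F i = ∑ t ∈ Finset.range M, (F (2 * t) + F (2 * t + 1)) := by
  induction M with
  | zero => simp
  | succ M ih =>
    rw [Nat.mul_succ, show 2 * M + 2 = 2 * M + 1 + 1 from rfl, Finset.sum_range_succ,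
      Finset.sum_range_succ, Finset.sum_range_succ, ih]
    abel

/-- For `m ≥ 1` and `n ≥ 2m`, the free Lie algebra on `m` generators is a quotient of the
Yang–Mills algebra `ym(n)`: there is a surjective Lie algebra morphism from the free Lie
algebra on `n` generators onto the free Lie algebra on `m` generators killing all the
Yang–Mills relations. -/
theorem freeLie_quotient_of_yangMills (k : Type*) [Field k] [IsAlgClosed k] [CharZero k]
    (m n : ℕ) (hm : 1 ≤ m) (hn : 2 * m ≤ n) :
    ∃ φ : FreeLieAlgebra k (Fin n) →ₗ⁅k⁆ FreeLieAlgebra k (Fin m),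
      Function.Surjective φ ∧ ∀ j : Fin n, φ (ymRel k n j) = 0 := by
  -- a square root of -1
  obtain ⟨I, hI⟩ : ∃ I : k, I * I = -1 := by
    obtain ⟨I, hI⟩ := IsAlgClosed.exists_pow_nat_eq (-1 : k) (n := 2) (by norm_num)
    exact ⟨I, by rw [← sq]; exact hI⟩
  set c : ℕ → k := fun i => if i < 2 * m then (if i % 2 = 0 then 1 else I) else 0 with hc
  set g : ℕ → Fin m := fun i => ⟨i / 2 % m, Nat.mod_lt _ hm⟩ with hg
  set a : Fin n → FreeLieAlgebra k (Fin m) := fun i => c i.val • of k (g i.val) with ha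
  set φ : FreeLieAlgebra k (Fin n) →ₗ⁅k⁆ FreeLieAlgebra k (Fin m) := lift k a with hφ
  have hφof : ∀ i : Fin n, φ (of k i) = a i := fun i => lift_of_apply a i
  refine ⟨φ, ?_, ?_⟩
  · -- surjectivity via a right inverse
    have h2t : ∀ t : Fin m, 2 * (t : ℕ) < n := fun t =>
      lt_of_lt_of_le (by omega) hn
    set ψ : FreeLieAlgebra k (Fin m) →ₗ⁅k⁆ FreeLieAlgebra k (Fin n) :=
      lift k (fun t : Fin m => of k (⟨2 * t, h2t t⟩ : Fin n)) with hψ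
    have key : ∀ x, φ (ψ x) = x := by
      have : (φ.comp ψ : FreeLieAlgebra k (Fin m) →ₗ⁅k⁆ FreeLieAlgebra k (Fin m)) ∘ of k
          = of k := by
        funext t
        have ht : (t : ℕ) < m := t.isLt
        have : φ (ψ (of k t)) = a ⟨2 * t, h2t t⟩ := by
          rw [hψ, lift_of_apply, hφof]
        simp only [LieHom.comp_apply, Function.comp_apply]
        rw [this]
        show c (2 * (t : ℕ)) • of k (g (2 * (t : ℕ))) = of k t
        have h1 : c (2 * (t : ℕ)) = 1 := by
          simp only [hc]
          rw [if_pos (by omega), if_pos (by omega)]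
        have h2 : g (2 * (t : ℕ)) = t := by
          simp only [hg]
          ext
          simp only
          rw [Nat.mul_div_cancel_left _ (by norm_num : 0 < 2), Nat.mod_eq_of_lt ht]
        rw [h1, h2, one_smul]
      have := (lift_unique (of k) (φ.comp ψ)).mp this
      have h2 := (lift_unique (of k) (LieHom.id : FreeLieAlgebra k (Fin m) →ₗ⁅k⁆
        FreeLieAlgebra k (Fin m))).mp (by funext; rfl)
      intro x
      have : φ.comp ψ = LieHom.id := this.trans h2.symm
      exact LieHom.congr_fun this x
    exact fun x => ⟨ψ x, key x⟩
  · -- relations are killed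
    intro j
    have hsum : φ (∑ i : Fin n, ⁅of k i, ⁅of k i, of k j⁆⁆)
        = ∑ i : Fin n, φ ⁅of k i, ⁅of k i, of k j⁆⁆ := map_sum φ.toLinearMap _ _
    rw [ymRel, hsum]
    have step : ∀ i : Fin n, φ ⁅of k i, ⁅of k i, of k j⁆⁆
        = (c i.val * c i.val) • ⁅of k (g i.val), ⁅of k (g i.val), a j⁆⁆ := by
      intro i
      rw [LieHom.map_lie, LieHom.map_lie, hφof,
        show a i = c i.val • of k (g i.val) from rfl]
      rw [smul_lie, smul_lie, lie_smul, smul_smul, hφof]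
    simp only [step]
    set w : FreeLieAlgebra k (Fin m) := a j with hw
    set F : ℕ → FreeLieAlgebra k (Fin m) :=
      fun i => (c i * c i) • ⁅of k (g i), ⁅of k (g i), w⁆⁆ with hF
    have : ∑ i : Fin n, F i.val = ∑ i ∈ Finset.range n, F i := by
      rw [Fin.sum_univ_eq_sum_range]
    rw [show (∑ i : Fin n, (c i.val * c i.val) • ⁅of k (g i.val), ⁅of k (g i.val), w⁆⁆)
        = ∑ i : Fin n, F i.val from rfl, this]
    have hzero : ∀ i ∈ Finset.range n, i ∉ Finset.range (2 * m) → F i = 0 := by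
      intro i _ hi
      simp only [Finset.mem_range, not_lt] at hi
      have : c i = 0 := by simp only [hc]; rw [if_neg (by omega)]
      simp [hF, this]
    rw [← Finset.sum_subset (Finset.range_subset_range.mpr hn) hzero]
    rw [sum_range_two_mul' F m]
    apply Finset.sum_eq_zero
    intro t ht
    simp only [Finset.mem_range] at ht
    have e1 : c (2 * t) = 1 := by
      simp only [hc]; rw [if_pos (by omega), if_pos (by omega)]
    have e2 : c (2 * t + 1) = I := by
      simp only [hc]; rw [if_pos (by omega), if_neg (by omega)]
    have e3 : g (2 * t) = g (2 * t + 1) := by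
      have h : 2 * t / 2 = (2 * t + 1) / 2 := by omega
      simp only [hg, h]
    rw [hF]
    simp only [e1, e2, e3, hI, one_mul]
    rw [neg_smul, one_smul, add_neg_cancel]
end

section
/- Let k be an algebraically closed field of characteristic zero and n ≥ 4. Then the Witt algebra, i.e. the Lie algebra of k-linear derivations of the Laurent polynomial ring k[z, z⁻¹], is a quotient of the Yang–Mills algebra ym(n). Equivalently, there exists a surjective Lie algebra morphism φ from the free Lie algebra over k on generators x_1, …, x_n onto the Lie algebra of derivations of k[z, z⁻¹] such that φ(r_j) = 0 for all j = 1, …, n. -/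
/-!
If `I ^ 2 = -1`, then `ad (I • a) ^ 2 = -(ad a) ^ 2`, so sending `x₁, x₂, x₃, x₄` to
`a, I • a, b, I • b` and the other generators to `0` kills every relation `∑ᵢ ad(xᵢ)² xⱼ`.
Take `a = e₋₂` and `b = e₃`. In characteristic zero `[e_n, e_m] = (m - n) e_{n+m}` produces
`e₁`, then `e₋₁`, `e₀`, `e₂`, and bracketing with `e_{±1}` reaches every `e_m`. The `e_m` span
all derivations, because a derivation of `k[z, z⁻¹]` is determined by its value at `z`, so the
morphism is onto.
-/

open FreeLieAlgebra

namespace AddMonoidAlgebra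

variable {R G : Type*} [CommSemiring R] [AddCommMonoid G]

noncomputable def gradingLinearMap (φ : G →+ R) : R[G] →ₗ[R] R[G] :=
  Finsupp.lsum R (fun g => φ g • lsingle g) ∘ₗ (coeffLinearEquiv R).toLinearMap

lemma gradingLinearMap_single (φ : G →+ R) (g : G) (c : R) :
    gradingLinearMap φ (single g c) = φ g • single g c := by
  simp [gradingLinearMap]

lemma gradingLinearMap_mul (φ : G →+ R) (x y : R[G]) :
    gradingLinearMap φ (x * y) = x * gradingLinearMap φ y + y * gradingLinearMap φ x := by
  induction x using induction_linear with
  | zero => simp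
  | add x x' hx hx' => simp only [add_mul, map_add, hx, hx']; ring
  | single g c =>
    induction y using induction_linear with
    | zero => simp
    | add y y' hy hy' => simp only [mul_add, map_add, hy, hy']; ring
    | single h d =>
      simp only [single_mul_single, gradingLinearMap_single, map_add, mul_smul_comm, add_smul]
      rw [add_comm h g, mul_comm d c, add_comm]

noncomputable def gradingDerivation (φ : G →+ R) : Derivation R R[G] R[G] where
  toLinearMap := gradingLinearMap φ
  map_one_eq_zero' := by simp [one_def, gradingLinearMap_single]
  leibniz' := gradingLinearMap_mul φ

@[simp]
lemma gradingDerivation_single (φ : G →+ R) (g : G) (c : R) :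
    gradingDerivation φ (single g c) = φ g • single g c :=
  gradingLinearMap_single φ g c

end AddMonoidAlgebra

lemma Derivation.lie_smul_smul {R A : Type*} [CommRing R] [CommRing A] [Algebra R A]
    (D : Derivation R A A) (a b : A) : ⁅a • D, b • D⁆ = (a * D b - b * D a) • D := by
  ext x
  simp only [commutator_apply, smul_apply, leibniz, smul_eq_mul, sub_smul, sub_apply]
  ring

namespace LaurentPolynomial

variable {R : Type*} [CommRing R]

lemma adjoin_T_one_T_neg_one : Algebra.adjoin R {(T 1 : R[T;T⁻¹]), T (-1)} = ⊤ := by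
  have hT : ∀ n : ℤ, (T n : R[T;T⁻¹]) ∈ Algebra.adjoin R {T 1, T (-1)} := by
    intro n
    obtain ⟨n, rfl | rfl⟩ := n.eq_nat_or_neg
    · simpa [T_pow] using pow_mem (Algebra.subset_adjoin (by simp) : (T 1 : R[T;T⁻¹]) ∈ _) n
    · simpa [T_pow] using pow_mem (Algebra.subset_adjoin (by simp) : (T (-1) : R[T;T⁻¹]) ∈ _) n
  refine Algebra.eq_top_iff.2 fun f => ?_
  induction f using LaurentPolynomial.induction_on' with
  | add p q hp hq => exact add_mem hp hq
  | C_mul_T n a =>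
    refine mul_mem ?_ (hT n)
    rw [C_eq_algebraMap]
    exact Subalgebra.algebraMap_mem _ a

lemma derivation_ext {M : Type*} [AddCommGroup M] [Module R[T;T⁻¹] M] [Module R M]
    {D₁ D₂ : Derivation R R[T;T⁻¹] M} (h : D₁ (T 1) = D₂ (T 1)) : D₁ = D₂ := by
  have hT : (T (-1) : R[T;T⁻¹]) * T 1 = 1 := by rw [← T_add]; simp [T_zero]
  refine Derivation.ext_of_adjoin_eq_top _ adjoin_T_one_T_neg_one ?_
  rintro _ (rfl | rfl)
  · exact h
  · rw [Derivation.leibniz_of_mul_eq_one _ hT, Derivation.leibniz_of_mul_eq_one _ hT, h]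

variable (R) in
noncomputable def eulerDerivation : Derivation R R[T;T⁻¹] R[T;T⁻¹] :=
  AddMonoidAlgebra.gradingDerivation (Int.castAddHom R)

lemma eulerDerivation_T (n : ℤ) : eulerDerivation R (T n) = (n : R) • T n :=
  AddMonoidAlgebra.gradingDerivation_single _ n 1

lemma eq_smul_eulerDerivation (D : Derivation R R[T;T⁻¹] R[T;T⁻¹]) :
    D = (T (-1) * D (T 1)) • eulerDerivation R := by
  refine derivation_ext ?_
  rw [Derivation.smul_apply, eulerDerivation_T, smul_eq_mul, Int.cast_one, one_smul,
    mul_comm (T (-1)), mul_assoc, ← T_add]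
  simp [T_zero]

variable (R) in
/-- The basis element `e_m = z ^ (m + 1) d/dz = z ^ m • (z d/dz)` of the Witt algebra. -/
noncomputable def wittDerivation (m : ℤ) : Derivation R R[T;T⁻¹] R[T;T⁻¹] :=
  (T m : R[T;T⁻¹]) • eulerDerivation R

lemma wittDerivation_lie (n m : ℤ) :
    ⁅wittDerivation R n, wittDerivation R m⁆ = ((m : R) - n) • wittDerivation R (n + m) := by
  rw [wittDerivation, wittDerivation, Derivation.lie_smul_smul, eulerDerivation_T,
    eulerDerivation_T, wittDerivation, ← smul_assoc]
  congr 1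
  simp only [mul_smul_comm, ← T_add, add_comm m n, sub_smul]

lemma span_wittDerivation : Submodule.span R (Set.range (wittDerivation R)) = ⊤ := by
  have hT : Submodule.span R (Set.range (T : ℤ → R[T;T⁻¹])) = ⊤ :=
    (AddMonoidAlgebra.basis ℤ R).span_eq
  let smulEuler := LinearMap.smulRight (LinearMap.id : R[T;T⁻¹] →ₗ[R] R[T;T⁻¹]) (eulerDerivation R)
  have hrange : Set.range (wittDerivation R) = smulEuler '' Set.range T := by
    rw [← Set.range_comp]; rfl
  rw [hrange, Submodule.span_image, hT, Submodule.map_top, LinearMap.range_eq_top]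
  exact fun D => ⟨_, (eq_smul_eulerDerivation D).symm⟩

section CharZero

variable {k : Type*} [Field k] [CharZero k]

lemma wittDerivation_add_mem {S : LieSubalgebra k (Derivation k k[T;T⁻¹] k[T;T⁻¹])} {n m : ℤ}
    (hnm : n ≠ m) (hn : wittDerivation k n ∈ S) (hm : wittDerivation k m ∈ S) :
    wittDerivation k (n + m) ∈ S := by
  have hmn : (m : k) - n ≠ 0 := sub_ne_zero.2 (Int.cast_injective.ne hnm.symm)
  simpa [wittDerivation_lie, smul_smul, hmn] using S.smul_mem ((m : k) - n)⁻¹ (S.lie_mem hn hm)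

lemma wittDerivation_mem_of_mem {S : LieSubalgebra k (Derivation k k[T;T⁻¹] k[T;T⁻¹])}
    (h_neg2 : wittDerivation k (-2) ∈ S) (h3 : wittDerivation k 3 ∈ S) (m : ℤ) :
    wittDerivation k m ∈ S := by
  have h1 : wittDerivation k 1 ∈ S := by
    simpa using wittDerivation_add_mem (by norm_num) h_neg2 h3
  have h_neg1 : wittDerivation k (-1) ∈ S := by
    simpa using wittDerivation_add_mem (by norm_num) h_neg2 h1
  have h0 : wittDerivation k 0 ∈ S := by
    simpa using wittDerivation_add_mem (by norm_num) h_neg1 h1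
  have h2 : wittDerivation k 2 ∈ S := by
    simpa using wittDerivation_add_mem (by norm_num) h_neg1 h3
  obtain hm | hm | hm : 2 ≤ m ∨ m ≤ -2 ∨ (-2 < m ∧ m < 2) := by omega
  · induction m, hm using Int.leInduction with
    | base => exact h2
    | succ m hm ih => simpa [add_comm] using wittDerivation_add_mem (by omega) h1 ih
  · induction m, hm using Int.leInductionDown with
    | base => exact h_neg2
    | pred m hm ih => simpa [sub_eq_neg_add] using wittDerivation_add_mem (by omega) h_neg1 ih
  · obtain rfl | rfl | rfl : m = -1 ∨ m = 0 ∨ m = 1 := by omega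
    exacts [h_neg1, h0, h1]

lemma lieSpan_wittDerivation_neg_two_three :
    LieSubalgebra.lieSpan k _ {wittDerivation k (-2), wittDerivation k 3} = ⊤ := by
  set S := LieSubalgebra.lieSpan k _ {wittDerivation k (-2), wittDerivation k 3}
  have hS : Submodule.span k (Set.range (wittDerivation k)) ≤ S.toSubmodule := by
    refine Submodule.span_le.2 ?_
    rintro _ ⟨m, rfl⟩
    exact wittDerivation_mem_of_mem (LieSubalgebra.subset_lieSpan (by simp))
      (LieSubalgebra.subset_lieSpan (by simp)) m
  rw [span_wittDerivation, top_le_iff] at hS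
  exact LieSubalgebra.toSubmodule_injective hS

end CharZero

end LaurentPolynomial

section YangMills

variable {R L : Type*} [CommRing R] [LieRing L] [LieAlgebra R L]

lemma lie_smul_lie_smul_of_sq_eq_neg_one {I : R} (hI : I ^ 2 = -1) (a y : L) :
    ⁅I • a, ⁅I • a, y⁆⁆ = -⁅a, ⁅a, y⁆⁆ := by
  rw [smul_lie, smul_lie, lie_smul, smul_smul, ← sq, hI, neg_one_smul]

lemma sum_lie_lie_append_eq_zero {I : R} (hI : I ^ 2 = -1) (a b y : L) (m : ℕ) :
    ∑ i, ⁅Fin.append ![a, I • a, b, I • b] (0 : Fin m → L) i,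
      ⁅Fin.append ![a, I • a, b, I • b] (0 : Fin m → L) i, y⁆⁆ = 0 := by
  simp only [Fin.sum_univ_add, Fin.sum_univ_four, Fin.append_left, Fin.append_right]
  simp only [Matrix.cons_val, Pi.zero_apply, zero_lie, Finset.sum_const_zero, add_zero,
    lie_smul_lie_smul_of_sq_eq_neg_one hI]
  abel

lemma lift_ymRel {k : Type*} [Field k] [LieAlgebra k L] {n : ℕ} (v : Fin n → L) (j : Fin n) :
    lift k v (ymRel k n j) = ∑ i, ⁅v i, ⁅v i, v j⁆⁆ := by
  simp only [ymRel, map_sum, LieHom.map_lie, lift_of_apply]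

end YangMills

open LaurentPolynomial in
/-- For `n ≥ 4`, the Witt algebra, i.e. the Lie algebra of `k`-linear derivations of the
Laurent polynomial ring `k[z,z⁻¹]`, is a quotient of the Yang–Mills algebra `ym(n)`:
there is a surjective Lie algebra morphism from the free Lie algebra on `n` generators onto
the derivations of `k[z,z⁻¹]` killing all the Yang–Mills relations. -/
theorem witt_quotient_of_yangMills (k : Type*) [Field k] [IsAlgClosed k] [CharZero k]
    (n : ℕ) (hn : 4 ≤ n) :
    ∃ φ : FreeLieAlgebra k (Fin n) →ₗ⁅k⁆
        Derivation k (LaurentPolynomial k) (LaurentPolynomial k),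
      Function.Surjective φ ∧ ∀ j : Fin n, φ (ymRel k n j) = 0 := by
  obtain ⟨I, hI⟩ := IsAlgClosed.exists_pow_nat_eq (-1 : k) (n := 2) (by norm_num)
  obtain ⟨m, rfl⟩ := Nat.exists_eq_add_of_le hn
  refine ⟨lift k (Fin.append ![wittDerivation k (-2), I • wittDerivation k (-2),
    wittDerivation k 3, I • wittDerivation k 3] 0), ?_, fun j => ?_⟩
  · rw [← LieHom.range_eq_top, eq_top_iff, ← lieSpan_wittDerivation_neg_two_three,
      LieSubalgebra.lieSpan_le]
    rintro _ (rfl | rfl)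
    · exact ⟨of k (Fin.castAdd m 0), by simp⟩
    · exact ⟨of k (Fin.castAdd m 2), by simp⟩
  · rw [lift_ymRel]
    exact sum_lie_lie_append_eq_zero hI (wittDerivation k (-2)) (wittDerivation k 3) _ m
end

section
/- Let k be an algebraically closed field of characteristic zero and let φ : ym(3) → sl(2, k) be any morphism of Lie algebras. Then the image of φ is a solvable Lie subalgebra of sl(2, k). Equivalently, if φ is a Lie algebra morphism from the free Lie algebra over k on generators x₁, x₂, x₃ to sl(2, k) satisfying φ(r_j) = 0 for j = 1, 2, 3, then the Lie subalgebra of sl(2, k) given by the range of φ is solvable. -/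
open FreeLieAlgebra

/-- The Yang–Mills relation `r j = ∑ i [xᵢ,[xᵢ,xⱼ]]` in the free Lie algebra on three
generators over `k`. -/
noncomputable def ymRel3 (k : Type*) [Field k] (j : Fin 3) : FreeLieAlgebra k (Fin 3) :=
  ∑ i : Fin 3, ⁅of k i, ⁅of k i, of k j⁆⁆

/-!
On `sl(2, k)` with the trace form `B x y = tr (x y)` one has
`⁅x, ⁅y, z⁆⁆ = 2 B(x, y) z - 2 B(x, z) y`, so the Yang–Mills relations for `x₀, x₁, x₂` say that
`∑ᵢ B(xᵢ, xⱼ) xᵢ = (tr G) xⱼ`, where `G` is the Gram matrix. The triple product `B(x₀, ⁅x₁, x₂⁆)`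
is twice the determinant of the coordinates of the `xᵢ`, and its square is `-2 det G`. If the `xᵢ`
were independent, the relations would force `G = (tr G) • 1`, hence `tr G = 3 tr G` and `G = 0`,
so the triple product would vanish: a contradiction. So, after reordering, `x₂ = a x₀ + b x₁`.
If `B(⁅x₀, x₁⁆, ⁅x₀, x₁⁆) = 2 (B(x₀, x₁)² - B(x₀, x₀) B(x₁, x₁))` were nonzero, `x₀, x₁` would be
independent, and comparing coefficients in the relations shows that it vanishes after all. Hence
the triple `⁅x₀, x₁⁆, x₀, x₁` is dependent, `⁅x₀, x₁⁆ ∈ span {x₀, x₁}`, and this span is a Lie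
subalgebra containing the image of `φ` whose derived algebra lies in `k ∙ ⁅x₀, x₁⁆`.
-/

open LieAlgebra LieSubalgebra Submodule SpecialLinear

section

variable {R L : Type*} [CommRing R] [LieRing L] [LieAlgebra R L]

theorem lie_mem_span_singleton_of_mem_span_pair {u v m n : L} (hm : m ∈ span R {u, v})
    (hn : n ∈ span R {u, v}) : ⁅m, n⁆ ∈ R ∙ ⁅u, v⁆ := by
  obtain ⟨a, b, rfl⟩ := mem_span_pair.1 hm
  obtain ⟨c, d, rfl⟩ := mem_span_pair.1 hn
  refine mem_span_singleton.2 ⟨a * d - b * c, ?_⟩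
  simp only [add_lie, lie_add, smul_lie, lie_smul, lie_self, smul_zero, add_zero, zero_add,
    ← lie_skew v u]
  module

theorem lie_eq_zero_of_not_linearIndependent {K : Type*} [Field K] [LieAlgebra K L] {x y : L}
    (h : ¬LinearIndependent K ![x, y]) : ⁅x, y⁆ = 0 := by
  rcases eq_or_ne x 0 with rfl | hx
  · exact zero_lie y
  · obtain ⟨a, rfl⟩ := not_forall_not.1 (mt (LinearIndependent.pair_iff' hx).2 h)
    rw [lie_smul, lie_self, smul_zero]

theorem isSolvable_of_forall_lie_mem_span_singleton (w : L) (h : ∀ a b : L, ⁅a, b⁆ ∈ R ∙ w) :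
    IsSolvable L := by
  have hD : ∀ x ∈ derivedSeries R L 1, x ∈ R ∙ w := by
    intro x hx
    rw [← LieSubmodule.mem_toSubmodule, derivedSeries_def, derivedSeriesOfIdeal_succ,
      derivedSeriesOfIdeal_zero, LieSubmodule.lieIdeal_oper_eq_linear_span'] at hx
    exact span_le.2 (by rintro _ ⟨a, -, b, -, rfl⟩; exact h a b) hx
  refine IsSolvable.mk (R := R) (k := 2) ?_
  rw [derivedSeries_def, derivedSeriesOfIdeal_succ, ← derivedSeries_def,
    LieSubmodule.lie_eq_bot_iff]
  intro x hx y hy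
  obtain ⟨c, rfl⟩ := mem_span_singleton.1 (hD x hx)
  obtain ⟨d, rfl⟩ := mem_span_singleton.1 (hD y hy)
  simp

theorem coe_lieSpan_pair_eq_span {u v : L} (h : ⁅u, v⁆ ∈ span R {u, v}) :
    (lieSpan R L {u, v} : Submodule R L) = span R {u, v} := by
  refine le_antisymm ?_ submodule_span_le_lieSpan
  change _ ≤ ({ span R {u, v} with
    lie_mem' := fun hm hn => span_le.2 (by simpa using h)
      (lie_mem_span_singleton_of_mem_span_pair hm hn) } : LieSubalgebra R L)
  rw [lieSpan_le]
  exact subset_span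

theorem isSolvable_lieSpan_pair {u v : L} (h : ⁅u, v⁆ ∈ span R {u, v}) :
    IsSolvable (lieSpan R L {u, v}) := by
  have hmem (m : lieSpan R L {u, v}) : (m : L) ∈ span R {u, v} := by
    rw [← coe_lieSpan_pair_eq_span h]
    exact m.2
  refine isSolvable_of_forall_lie_mem_span_singleton (R := R)
    ⟨⁅u, v⁆, lie_mem _ (subset_lieSpan (by simp)) (subset_lieSpan (by simp))⟩ fun a b => ?_
  obtain ⟨c, hc⟩ :=
    mem_span_singleton.1 (lie_mem_span_singleton_of_mem_span_pair (hmem a) (hmem b))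
  exact mem_span_singleton.2 ⟨c, Subtype.ext hc⟩

theorem FreeLieAlgebra.range_le_of_forall_mem {X : Type*} (φ : FreeLieAlgebra R X →ₗ⁅R⁆ L)
    (K : LieSubalgebra R L) (h : ∀ x, φ (of R x) ∈ K) : φ.range ≤ K := by
  have hφ : φ = K.incl.comp (lift R fun x => ⟨φ (of R x), h x⟩) := hom_ext fun x => by simp
  rw [hφ]
  rintro _ ⟨y, rfl⟩
  exact (lift R (fun x => (⟨φ (of R x), h x⟩ : K)) y).2

def IsYangMills {ι : Type*} [Fintype ι] (x : ι → L) : Prop :=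
  ∀ j, ∑ i, ⁅x i, ⁅x i, x j⁆⁆ = 0

theorem IsYangMills.comp_equiv {ι κ : Type*} [Fintype ι] [Fintype κ] {x : ι → L}
    (hx : IsYangMills x) (σ : κ ≃ ι) : IsYangMills (x ∘ σ) := fun j => by
  simpa using (Equiv.sum_comp σ fun i => ⁅x i, ⁅x i, x (σ j)⁆⁆).trans (hx (σ j))

end

section

variable {k : Type*} [Field k]

local notation "𝔰𝔩₂" => sl (Fin 2) k

namespace Sl2

theorem val_one_one (x : 𝔰𝔩₂) : x.val 1 1 = -x.val 0 0 := by
  have h : x.val.trace = 0 := x.2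
  rw [Matrix.trace_fin_two] at h
  linear_combination h

theorem ext_of_apply {x y : 𝔰𝔩₂} (h₀₀ : x.val 0 0 = y.val 0 0) (h₀₁ : x.val 0 1 = y.val 0 1)
    (h₁₀ : x.val 1 0 = y.val 1 0) : x = y := by
  ext i j
  fin_cases i <;> fin_cases j
  exacts [h₀₀, h₀₁, h₁₀, by simp [val_one_one, h₀₀]]

theorem lie_val_apply (x y : 𝔰𝔩₂) (i j : Fin 2) :
    (⁅x, y⁆ : 𝔰𝔩₂).val i j = x.val i 0 * y.val 0 j + x.val i 1 * y.val 1 j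
      - (y.val i 0 * x.val 0 j + y.val i 1 * x.val 1 j) := by
  change (x.val * y.val - y.val * x.val) i j = _
  simp only [Matrix.sub_apply, Matrix.mul_apply, Fin.sum_univ_two]

def coords : 𝔰𝔩₂ →ₗ[k] Fin 3 → k where
  toFun x := ![x.val 0 0, x.val 0 1, x.val 1 0]
  map_add' _ _ := by ext i; fin_cases i <;> rfl
  map_smul' _ _ := by ext i; fin_cases i <;> rfl

theorem ker_coords : LinearMap.ker (coords (k := k)) = ⊥ :=
  LinearMap.ker_eq_bot'.2 fun _ hx =>
    ext_of_apply (congrFun hx 0) (congrFun hx 1) (congrFun hx 2)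

def traceForm : LinearMap.BilinForm k 𝔰𝔩₂ :=
  LinearMap.mk₂ k (fun x y => (x.val * y.val).trace)
    (fun _ _ _ => by simp [add_mul]) (fun _ _ _ => by simp)
    (fun _ _ _ => by simp [mul_add]) (fun _ _ _ => by simp)

theorem traceForm_apply (x y : 𝔰𝔩₂) : traceForm x y =
    2 * (x.val 0 0 * y.val 0 0) + x.val 0 1 * y.val 1 0 + x.val 1 0 * y.val 0 1 := by
  change (x.val * y.val).trace = _
  simp only [Matrix.trace_fin_two, Matrix.mul_apply, Fin.sum_univ_two, val_one_one]
  ring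

theorem traceForm_comm (x y : 𝔰𝔩₂) : traceForm x y = traceForm y x := by
  simp only [traceForm_apply]
  ring

theorem lie_lie_eq_traceForm_smul (x y z : 𝔰𝔩₂) :
    ⁅x, ⁅y, z⁆⁆ = (2 * traceForm x y) • z - (2 * traceForm x z) • y := by
  apply ext_of_apply <;>
    simp only [lie_val_apply, traceForm_apply, AddSubgroupClass.coe_sub, SetLike.val_smul,
      Matrix.sub_apply, Matrix.smul_apply, smul_eq_mul, val_one_one] <;>
    ring

theorem sum_lie_lie {ι : Type*} [Fintype ι] (x : ι → 𝔰𝔩₂) (j : ι) :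
    ∑ i, ⁅x i, ⁅x i, x j⁆⁆ =
      (2 : k) • ((∑ i, traceForm (x i) (x i)) • x j - ∑ i, traceForm (x i) (x j) • x i) := by
  simp only [lie_lie_eq_traceForm_smul, smul_sub, Finset.smul_sum, Finset.sum_smul,
    Finset.sum_sub_distrib, smul_smul]

theorem traceForm_lie_lie_self (x y : 𝔰𝔩₂) :
    traceForm ⁅x, y⁆ ⁅x, y⁆ = 2 * (traceForm x y ^ 2 - traceForm x x * traceForm y y) := by
  simp only [traceForm_apply, lie_val_apply, val_one_one]
  ring

theorem traceForm_lie_sq (x : Fin 3 → 𝔰𝔩₂) :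
    traceForm (x 0) ⁅x 1, x 2⁆ ^ 2 =
      -2 * (Matrix.of fun i j => traceForm (x i) (x j)).det := by
  simp only [Matrix.det_fin_three, Matrix.of_apply, traceForm_apply, lie_val_apply, val_one_one]
  ring

theorem traceForm_lie_eq_two_mul_det (x : Fin 3 → 𝔰𝔩₂) :
    traceForm (x 0) ⁅x 1, x 2⁆ = 2 * (Matrix.of fun i => coords (x i)).det := by
  simp only [coords, LinearMap.coe_mk, AddHom.coe_mk, Matrix.det_fin_three, Matrix.of_apply,
    Matrix.cons_val_zero, Matrix.cons_val_one, Matrix.cons_val, traceForm_apply, lie_val_apply,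
    val_one_one]
  ring

variable [NeZero (2 : k)]

theorem linearIndependent_iff_traceForm_lie_ne_zero (x : Fin 3 → 𝔰𝔩₂) :
    LinearIndependent k x ↔ traceForm (x 0) ⁅x 1, x 2⁆ ≠ 0 := by
  rw [← coords.linearIndependent_iff ker_coords, traceForm_lie_eq_two_mul_det,
    mul_ne_zero_iff_left two_ne_zero, ← isUnit_iff_ne_zero, ← Matrix.isUnit_iff_isUnit_det,
    ← Matrix.linearIndependent_rows_iff_isUnit]
  rfl

theorem lie_mem_span_pair_of_traceForm_lie_lie_self_eq_zero {x y : 𝔰𝔩₂}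
    (h : traceForm ⁅x, y⁆ ⁅x, y⁆ = 0) : ⁅x, y⁆ ∈ span k {x, y} := by
  have hdep : ¬LinearIndependent k (Fin.cons ⁅x, y⁆ ![x, y] : Fin 3 → 𝔰𝔩₂) := by
    rw [linearIndependent_iff_traceForm_lie_ne_zero]
    simpa using h
  rw [linearIndependent_finCons, Matrix.range_cons_cons_empty] at hdep
  by_cases hli : LinearIndependent k ![x, y]
  · exact not_not.1 (not_and.1 hdep hli)
  · rw [lie_eq_zero_of_not_linearIndependent hli]
    exact zero_mem _

end Sl2

namespace IsYangMills

open Sl2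

variable [NeZero (2 : k)]

theorem sum_traceForm_smul {ι : Type*} [Fintype ι] {x : ι → 𝔰𝔩₂} (hx : IsYangMills x)
    (j : ι) : ∑ i, traceForm (x i) (x j) • x i = (∑ i, traceForm (x i) (x i)) • x j := by
  have h := hx j
  rw [sum_lie_lie, smul_eq_zero_iff_right two_ne_zero, sub_eq_zero] at h
  exact h.symm

theorem traceForm_eq_of_linearIndependent {ι : Type*} [Fintype ι] [DecidableEq ι]
    {x : ι → 𝔰𝔩₂} (hx : IsYangMills x) (hli : LinearIndependent k x) (i j : ι) :
    traceForm (x i) (x j) = if i = j then ∑ l, traceForm (x l) (x l) else 0 :=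
  Fintype.linearIndependent_iffₛ.1 hli (fun i => traceForm (x i) (x j))
    (fun i => if i = j then ∑ l, traceForm (x l) (x l) else 0)
    (by simp [hx.sum_traceForm_smul j, ite_smul]) i

theorem traceForm_lie_eq_zero {x : Fin 3 → 𝔰𝔩₂} (hx : IsYangMills x) :
    traceForm (x 0) ⁅x 1, x 2⁆ = 0 := by
  by_contra hd
  have hG := hx.traceForm_eq_of_linearIndependent
    ((linearIndependent_iff_traceForm_lie_ne_zero x).2 hd)
  set T := ∑ l, traceForm (x l) (x l)
  have hT : T = 0 := by
    have h3 : T = 3 * T :=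
      calc T = ∑ _l : Fin 3, T := Finset.sum_congr rfl fun l _ => by simp [hG]
        _ = 3 * T := by simp
    have h2 : (2 : k) * T = 0 := by linear_combination -h3
    exact (mul_eq_zero.1 h2).resolve_left two_ne_zero
  have hGram : (Matrix.of fun i j => traceForm (x i) (x j)) = 0 := by
    ext i j
    simp [hG, hT]
  apply hd
  rw [← sq_eq_zero_iff, traceForm_lie_sq, hGram]
  simp

theorem traceForm_lie_lie_self_eq_zero {x : Fin 3 → 𝔰𝔩₂} (hx : IsYangMills x)
    (h : x 2 ∈ span k {x 0, x 1}) : traceForm ⁅x 0, x 1⁆ ⁅x 0, x 1⁆ = 0 := by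
  by_contra hQ
  have hli : LinearIndependent k ![x 0, x 1] := by
    have := (linearIndependent_iff_traceForm_lie_ne_zero (Fin.cons ⁅x 0, x 1⁆ ![x 0, x 1])).2
      (by simpa using hQ)
    exact (linearIndependent_finCons.1 this).1
  obtain ⟨a, b, hz⟩ := mem_span_pair.1 h
  have hG := hx.sum_traceForm_smul
  simp only [Fin.sum_univ_three] at hG
  set T := traceForm (x 0) (x 0) + traceForm (x 1) (x 1) + traceForm (x 2) (x 2)
  -- Substitute `x 2 = a • x 0 + b • x 1` in the relations `j = 0, 2` and compare coefficients.
  obtain ⟨e₀₀, e₁₀⟩ := LinearIndependent.pair_iff.1 hli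
    (traceForm (x 0) (x 0) + a * traceForm (x 2) (x 0) - T)
    (traceForm (x 1) (x 0) + b * traceForm (x 2) (x 0))
    (by linear_combination (norm := module) hG 0 + traceForm (x 2) (x 0) • hz)
  obtain ⟨e₀₂, e₁₂⟩ := LinearIndependent.pair_iff.1 hli
    (traceForm (x 0) (x 2) + a * traceForm (x 2) (x 2) - a * T)
    (traceForm (x 1) (x 2) + b * traceForm (x 2) (x 2) - b * T)
    (by linear_combination (norm := module) hG 2 + (traceForm (x 2) (x 2) - T) • hz)
  simp only [T, ← hz, map_add, map_smul, LinearMap.add_apply, LinearMap.smul_apply, smul_eq_mul,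
    traceForm_comm (x 1) (x 0)] at e₀₀ e₁₀ e₀₂ e₁₂
  apply hQ
  rw [traceForm_lie_lie_self]
  linear_combination 2 * (traceForm (x 0) (x 1) * e₁₀ + traceForm (x 0) (x 0) * e₀₀
    - b * traceForm (x 0) (x 1) * e₀₂ - b * traceForm (x 1) (x 1) * e₁₂)

theorem exists_lie_mem_span_pair {x : Fin 3 → 𝔰𝔩₂} (hx : IsYangMills x) :
    ∃ u v : 𝔰𝔩₂, (∀ i, x i ∈ span k {u, v}) ∧ ⁅u, v⁆ ∈ span k {u, v} := by
  obtain ⟨g, hg, j, hj⟩ := Fintype.not_linearIndependent_iff.1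
    (mt (linearIndependent_iff_traceForm_lie_ne_zero x).1 (not_not.2 hx.traceForm_lie_eq_zero))
  -- Move a vector with nonzero coefficient in the dependence `g` to the last slot.
  set σ := Equiv.swap j 2
  have hy : IsYangMills (x ∘ σ) := hx.comp_equiv σ
  have hy₂ : (x ∘ σ) 2 ∈ span k {(x ∘ σ) 0, (x ∘ σ) 1} := by
    have hσg : ∑ i, g (σ i) • (x ∘ σ) i = 0 := (Equiv.sum_comp σ fun i => g i • x i).trans hg
    rw [Fin.sum_univ_three, add_eq_zero_iff_eq_neg] at hσg
    have hj' : g (σ 2) ≠ 0 := by simpa [σ] using hj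
    rw [← smul_mem_iff _ hj', ← neg_mem_iff, ← hσg]
    exact add_mem (smul_mem _ _ (subset_span (by simp))) (smul_mem _ _ (subset_span (by simp)))
  refine ⟨(x ∘ σ) 0, (x ∘ σ) 1, fun i => ?_,
    lie_mem_span_pair_of_traceForm_lie_lie_self_eq_zero (hy.traceForm_lie_lie_self_eq_zero hy₂)⟩
  rw [← Equiv.swap_apply_self j 2 i]
  change (x ∘ σ) (σ i) ∈ _
  generalize σ i = i'
  fin_cases i'
  exacts [subset_span (by simp), subset_span (by simp), hy₂]

end IsYangMills

end

theorem ym3_to_sl2_solvable_image_general (k : Type*) [Field k] [CharZero k]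
    (φ : FreeLieAlgebra k (Fin 3) →ₗ⁅k⁆ LieAlgebra.SpecialLinear.sl (Fin 2) k)
    (hφ : ∀ j : Fin 3, φ (ymRel3 k j) = 0) :
    LieAlgebra.IsSolvable φ.range := by
  have hx : IsYangMills fun i => φ (of k i) := fun j => by simpa [ymRel3] using hφ j
  obtain ⟨u, v, hmem, huv⟩ := hx.exists_lie_mem_span_pair
  have hle : φ.range ≤ lieSpan k _ {u, v} :=
    FreeLieAlgebra.range_le_of_forall_mem φ _ fun i => submodule_span_le_lieSpan (hmem i)
  have := isSolvable_lieSpan_pair huv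
  exact (LieSubalgebra.inclusion_injective hle).lieAlgebra_isSolvable

/-- Every Lie algebra morphism `ym(3) → sl(2,k)` has solvable image: if `φ` is a Lie algebra
morphism from the free Lie algebra on three generators to `sl(2,k)` killing the Yang–Mills
relations, then the range of `φ` is a solvable Lie subalgebra of `sl(2,k)`. -/
theorem ym3_to_sl2_solvable_image (k : Type*) [Field k] [IsAlgClosed k] [CharZero k]
    (φ : FreeLieAlgebra k (Fin 3) →ₗ⁅k⁆ LieAlgebra.SpecialLinear.sl (Fin 2) k)
    (hφ : ∀ j : Fin 3, φ (ymRel3 k j) = 0) :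
    LieAlgebra.IsSolvable φ.range :=
  ym3_to_sl2_solvable_image_general k φ hφ
end

section
/- Let k be an algebraically closed field of characteristic zero. Then sl(3, k) is a quotient of the Yang–Mills algebra ym(3); that is, there exists a surjective Lie algebra morphism φ from the free Lie algebra over k on generators x₁, x₂, x₃ onto sl(3, k) such that φ(r_j) = 0 for j = 1, 2, 3. -/
/-!
Send the generator `xᵢ` to the elementary matrix `E_{i+1,i}` (indices mod 3). For `a ≠ b` one has
`E_{ab}² = 0`, so `[E_{ab},[E_{ab},M]] = -2 E_{ab} M E_{ab} = -2 M_{ba} E_{ab}`; since no transpose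
`E_{i,i+1}` is among the images, every summand of every relation vanishes. The images and their
brackets `[E_{i+2,i+1}, E_{i+1,i}] = E_{i+2,i}` give all off-diagonal elementary matrices, whose
brackets `[E_{ab}, E_{ba}] = E_{aa} - E_{bb}` span the diagonal of `sl(3)`.
-/

open FreeLieAlgebra LieAlgebra.SpecialLinear

namespace Matrix

variable {n α : Type*} [Fintype n] [DecidableEq n] [Ring α]

theorem lie_single_lie_single_eq_zero {i j : n} (hij : i ≠ j) (a : α) {M : Matrix n n α}
    (hM : M j i = 0) : ⁅single i j a, ⁅single i j a, M⁆⁆ = 0 := by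
  have hsq : single i j a * single i j a = 0 := single_mul_single_of_ne _ _ _ _ hij.symm _
  have hsandwich : single i j a * M * single i j a = 0 := by simp [hM]
  simp only [Ring.lie_def, mul_sub, sub_mul, ← mul_assoc, hsq, hsandwich, zero_mul]
  rw [mul_assoc, hsq, mul_zero]
  abel

theorem lie_single_single_of_ne {i l : n} (hil : i ≠ l) (j : n) (a b : α) :
    ⁅single i j a, single j l b⁆ = single i l (a * b) := by
  simp [Ring.lie_def, hil.symm]

end Matrix

namespace LieAlgebra.SpecialLinear

variable {n R : Type*} [Fintype n] [DecidableEq n] [CommRing R]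

theorem lie_single_lie_single_eq_zero {i j : n} (hij : i ≠ j) (a : R) {v : sl n R}
    (hv : v.val j i = 0) : ⁅single i j hij a, ⁅single i j hij a, v⁆⁆ = 0 :=
  Subtype.ext (Matrix.lie_single_lie_single_eq_zero hij a hv)

theorem lie_single_single_of_ne {i j l : n} (hij : i ≠ j) (hjl : j ≠ l) (hil : i ≠ l) (a b : R) :
    ⁅single i j hij a, single j l hjl b⁆ = single i l hil (a * b) :=
  Subtype.ext (Matrix.lie_single_single_of_ne hil j a b)

theorem lie_single_single_swap {i j : n} (hij : i ≠ j) (a b : R) :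
    ⁅single i j hij a, single j i hij.symm b⁆ = singleSubSingle i j (a * b) := by
  ext1
  simp [Ring.lie_def, mul_comm b a]

theorem eq_sum_single_singleSubSingle (i₀ : n) (v : sl n R) :
    v = ∑ i, ∑ j,
      if h : i = j then singleSubSingle i i₀ (v.val i i) else single i j h (v.val i j) := by
  have hval : ∀ i j,
      ((if h : i = j then singleSubSingle i i₀ (v.val i i) else single i j h (v.val i j) :
        sl n R) : Matrix n n R) =
        Matrix.single i j (v.val i j) - if i = j then Matrix.single i₀ i₀ (v.val i j) else 0 := by
    intro i j
    split_ifs with h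
    · subst h; simp
    · simp
  have hdiag : ∑ i, Matrix.single i₀ i₀ (v.val i i) = 0 := by
    rw [← Matrix.single_zero i₀ i₀, ← show Matrix.trace v.val = 0 from v.2]
    exact (map_sum (Matrix.singleAddMonoidHom (α := R) i₀ i₀) _ _).symm
  ext1
  simp only [AddSubmonoidClass.coe_finsetSum, hval, Finset.sum_sub_distrib, Finset.sum_ite_eq,
    Finset.mem_univ, if_true]
  rw [← Matrix.matrix_eq_sum_single, hdiag, sub_zero]

theorem lieSubalgebra_eq_top_of_single_mem (K : LieSubalgebra R (sl n R))
    (hK : ∀ i j (hij : i ≠ j), single i j hij 1 ∈ K) : K = ⊤ := by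
  have hsingle : ∀ i j (hij : i ≠ j) r, single i j hij r ∈ K := fun i j hij r => by
    simpa only [← map_smul, smul_eq_mul, mul_one] using K.smul_mem r (hK i j hij)
  have hsub : ∀ i j r, singleSubSingle i j r ∈ K := fun i j r => by
    by_cases hij : i = j
    · subst hij
      have hzero : singleSubSingle i i r = 0 := by ext1; simp
      exact hzero ▸ K.zero_mem
    · rw [← one_mul r, ← lie_single_single_swap hij]
      exact K.lie_mem (hsingle _ _ _ _) (hsingle _ _ _ _)
  rw [eq_top_iff]
  intro v _
  rcases isEmpty_or_nonempty n with _ | ⟨⟨i₀⟩⟩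
  · exact Subsingleton.elim 0 v ▸ K.zero_mem
  rw [eq_sum_single_singleSubSingle i₀ v]
  refine K.sum_mem fun i _ => K.sum_mem fun j _ => ?_
  split_ifs with h
  · exact hsub _ _ _
  · exact hsingle _ _ _ _

end LieAlgebra.SpecialLinear

noncomputable def sl3Gen (k : Type*) [Field k] (i : Fin 3) : sl (Fin 3) k :=
  single (i + 1) i (by revert i; decide) 1

theorem lie_sl3Gen_lie_sl3Gen (k : Type*) [Field k] (i j : Fin 3) :
    ⁅sl3Gen k i, ⁅sl3Gen k i, sl3Gen k j⁆⁆ = 0 := by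
  refine lie_single_lie_single_eq_zero _ _ ?_
  have hji : ¬(j + 1 = i ∧ j = i + 1) := by revert i j; decide
  simp [sl3Gen, hji]

theorem lie_sl3Gen_succ (k : Type*) [Field k] (i : Fin 3) :
    ⁅sl3Gen k (i + 1), sl3Gen k i⁆ = single (i + 1 + 1) i (by revert i; decide) 1 := by
  rw [sl3Gen, sl3Gen, lie_single_single_of_ne, mul_one]

theorem single_mem_range_lift_sl3Gen (k : Type*) [Field k] (i j : Fin 3) (hij : i ≠ j) :
    single i j hij 1 ∈ (lift k (sl3Gen k)).range := by
  obtain rfl | rfl : i = j + 1 ∨ i = j + 1 + 1 := by revert i j; decide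
  · exact (LieHom.mem_range _ _).mpr ⟨of k j, lift_of_apply _ _⟩
  · refine (LieHom.mem_range _ _).mpr ⟨⁅of k (j + 1), of k j⁆, ?_⟩
    rw [LieHom.map_lie, lift_of_apply, lift_of_apply, lie_sl3Gen_succ]

theorem sl3_quotient_of_ym3_general (k : Type*) [Field k] :
    ∃ φ : FreeLieAlgebra k (Fin 3) →ₗ⁅k⁆ sl (Fin 3) k,
      Function.Surjective φ ∧ ∀ j : Fin 3, φ (ymRel3 k j) = 0 := by
  refine ⟨lift k (sl3Gen k), ?_, fun j => ?_⟩
  · rw [← LieHom.range_eq_top]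
    exact lieSubalgebra_eq_top_of_single_mem _ (single_mem_range_lift_sl3Gen k)
  · simp [ymRel3, map_sum, lie_sl3Gen_lie_sl3Gen]

/-- `sl(3,k)` is a quotient of the Yang–Mills algebra `ym(3)`: there is a surjective Lie
algebra morphism from the free Lie algebra on three generators onto `sl(3,k)` killing the
Yang–Mills relations. -/
theorem sl3_quotient_of_ym3 (k : Type*) [Field k] [IsAlgClosed k] [CharZero k] :
    ∃ φ : FreeLieAlgebra k (Fin 3) →ₗ⁅k⁆ sl (Fin 3) k,
      Function.Surjective φ ∧ ∀ j : Fin 3, φ (ymRel3 k j) = 0 :=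
  sl3_quotient_of_ym3_general k
end

section
/- Let k be an algebraically closed field of characteristic zero, and equip k² with the bilinear form x · y = x₁ y₁ + x₂ y₂. Let α, β, γ ∈ k² satisfy 2(β · β) + (α · γ) = 0, β · γ = 0, γ · γ = 0, together with the three vector equations (2(β · β) + (α · γ))α − 2(β · α)β − ((α · α) + 1)γ = 0, 2(α · γ)β − (α · β)γ − (β · γ)α = 0, and (2(β · β) + (α · γ))γ − (γ · γ)α − 2(β · γ)β = 0. Then γ = 0. -/
/-- The dot product on `k²`. -/
def dot {k : Type*} [Field k] (x y : k × k) : k := x.1 * y.1 + x.2 * y.2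

/-- The key algebraic lemma in the nilpotent case of the proof that every Lie algebra
morphism `ym(3) → sl(2,k)` has solvable image: if `α, β, γ ∈ k²` satisfy
`2(β·β) + (α·γ) = 0`, `β·γ = 0`, `γ·γ = 0` together with the three vector equations
`(2(β·β) + (α·γ))α − 2(β·α)β − ((α·α) + 1)γ = 0`,
`2(α·γ)β − (α·β)γ − (β·γ)α = 0` and
`(2(β·β) + (α·γ))γ − (γ·γ)α − 2(β·γ)β = 0`, then `γ = 0`. -/
theorem nilpotent_case_lemma (k : Type*) [Field k] [IsAlgClosed k] [CharZero k]
    (α β γ : k × k)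
    (h1 : 2 * dot β β + dot α γ = 0)
    (h2 : dot β γ = 0)
    (h3 : dot γ γ = 0)
    (e1 : (2 * dot β β + dot α γ) • α - (2 * dot β α) • β - (dot α α + 1) • γ = 0)
    (e2 : (2 * dot α γ) • β - dot α β • γ - dot β γ • α = 0)
    (e3 : (2 * dot β β + dot α γ) • γ - dot γ γ • α - (2 * dot β γ) • β = 0) :
    γ = 0 := by
  obtain ⟨i, hi⟩ := IsAlgClosed.exists_pow_nat_eq (-1 : k) (n := 2) (by norm_num)
  obtain ⟨a1, a2⟩ := α
  obtain ⟨b1, b2⟩ := β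
  obtain ⟨c, d⟩ := γ
  simp only [dot, Prod.smul_mk, Prod.mk_sub_mk, Prod.mk_eq_zero, smul_eq_mul] at *
  obtain ⟨e11, e12⟩ := e1
  have key : ∀ j : k, j ^ 2 = -1 → d - j * c = 0 → c = 0 ∧ d = 0 := by
    intro j hj h
    by_cases hc : c = 0
    · exact ⟨hc, by linear_combination h + j * hc⟩
    · exfalso
      have hb1 : b1 + j * b2 = 0 := by
        rcases mul_eq_zero.1 (show (b1 + j * b2) * c = 0 by
          linear_combination h2 - b2 * h) with h' | h'
        · exact h'
        · exact absurd h' hc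
      have hbb : b1 * b1 + b2 * b2 = 0 := by
        linear_combination (b1 - j * b2) * hb1 + b2 * b2 * hj
      have hag : a1 * c + a2 * d = 0 := by linear_combination h1 - 2 * hbb
      have ha1 : a1 + j * a2 = 0 := by
        rcases mul_eq_zero.1 (show (a1 + j * a2) * c = 0 by
          linear_combination hag - a2 * h) with h' | h'
        · exact h'
        · exact absurd h' hc
      have haa : a1 * a1 + a2 * a2 = 0 := by
        linear_combination (a1 - j * a2) * ha1 + a2 * a2 * hj
      have hba : b1 * a1 + b2 * a2 = 0 := by
        linear_combination a1 * hb1 - j * b2 * ha1 + a2 * b2 * hj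
      exact hc (by linear_combination -e11 + a1 * h1 - 2 * b1 * hba - c * haa)
  have hf : (d - i * c) * (d + i * c) = 0 := by linear_combination h3 - c * c * hi
  rcases mul_eq_zero.1 hf with h | h
  · exact key i hi h
  · exact key (-i) (by linear_combination hi) (by linear_combination h)
end
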